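/- Let F : ℝⁿ → ℝᵐ satisfy the local tangential cone condition with constant η ∈ [0, 1/2), and suppose x⋆ ∈ ℝⁿ satisfies F(x⋆) = 0. Let x_k ∈ ℝⁿ be such that F'(x_k) has full column rank and every row ∇F_i(x_k) is nonzero, let i_k ∈ argmax_{1≤i≤m} |F_i(x_k)|², and define the maximum residual nonlinear Kaczmarz update x_{k+1} = x_k − (F_{i_k}(x_k) / ‖∇F_{i_k}(x_k)‖₂²) ∇F_{i_k}(x_k). Then ‖x_{k+1} − x⋆‖₂² ≤ (1 − (1−2η) / ((1+η)² m² κ_F²(F'(x_k)))) ‖x_k − x⋆‖₂², where κ_F(A) = ‖A‖_F / σ_min(A). -/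

import Mathlib

open Matrix

/-- The singular values of a real matrix `A`: square roots of the eigenvalues of `AᵀA`. -/
noncomputable def singVals {m' : Type*} [Fintype m'] {n : ℕ}
    (A : Matrix m' (Fin n) ℝ) : Fin n → ℝ :=
  fun j => Real.sqrt ((Matrix.isHermitian_conjTranspose_mul_self A).eigenvalues j)

/-- The smallest singular value of `A`. -/
noncomputable def sigmaMin {m' : Type*} [Fintype m'] {n : ℕ}
    (A : Matrix m' (Fin n) ℝ) : ℝ :=
  ⨅ j, singVals A j

/-- The Frobenius norm of `A`. -/
noncomputable def frobNorm {m' : Type*} [Fintype m'] {n : ℕ}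
    (A : Matrix m' (Fin n) ℝ) : ℝ :=
  Real.sqrt (∑ i, ∑ j, (A i j) ^ 2)

/-- The scaled condition number `κ_F(A) = ‖A‖_F / σ_min(A)`. -/
noncomputable def kappaF {m' : Type*} [Fintype m'] {n : ℕ}
    (A : Matrix m' (Fin n) ℝ) : ℝ :=
  frobNorm A / sigmaMin A

/-! The tangential cone condition at `(x_k, x⋆)` puts the linearised residual
`⟪∇F_i(x_k), x_k − x⋆⟫` within `η |F_i(x_k)|` of `F_i(x_k)`. Expanding the square, one
Kaczmarz step therefore decreases `‖x_k − x⋆‖²` by at least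
`(1 − 2η) F_{i_k}(x_k)² / ‖∇F_{i_k}(x_k)‖²`. On the other hand
`σ_min² ‖x_k − x⋆‖² ≤ ‖F'(x_k)(x_k − x⋆)‖² ≤ (1 + η)² ∑ F_i(x_k)² ≤ (1 + η)² m F_{i_k}(x_k)²`
by the choice of `i_k`, and `‖∇F_{i_k}(x_k)‖² ≤ ‖F'(x_k)‖_F²`, so the decrease is at least the
stated fraction of `‖x_k − x⋆‖²`. -/

lemma Matrix.IsHermitian.mul_dotProduct_self_le_dotProduct_mulVec {ι : Type*} [Fintype ι]
    [DecidableEq ι] {M : Matrix ι ι ℝ} (hM : M.IsHermitian) {c : ℝ} (hc : ∀ j, c ≤ hM.eigenvalues j)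
    (v : ι → ℝ) : c * (v ⬝ᵥ v) ≤ v ⬝ᵥ (M *ᵥ v) := by
  set U : Matrix ι ι ℝ := (hM.eigenvectorUnitary : Matrix ι ι ℝ)
  set w := Uᵀ *ᵥ v
  have hUU : U * Uᵀ = 1 := Unitary.mul_star_self_of_mem hM.eigenvectorUnitary.2
  have hM' : M = U * diagonal hM.eigenvalues * Uᵀ := hM.spectral_theorem
  have hvw : ∀ N : Matrix ι ι ℝ, v ⬝ᵥ ((U * N * Uᵀ) *ᵥ v) = w ⬝ᵥ (N *ᵥ w) := fun N => by
    rw [← mulVec_mulVec, ← mulVec_mulVec, dotProduct_mulVec, ← mulVec_transpose]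
  have hnorm : v ⬝ᵥ v = w ⬝ᵥ w := by
    simpa [hUU] using hvw 1
  rw [hM', hvw, hnorm]
  simp only [dotProduct, mulVec_diagonal, Finset.mul_sum]
  exact Finset.sum_le_sum fun j _ => by
    linear_combination mul_le_mul_of_nonneg_right (hc j) (mul_self_nonneg (w j))

section SingularValues

variable {ι : Type*} [Fintype ι] {n : ℕ} (A : Matrix ι (Fin n) ℝ)

lemma sq_sigmaMin_le_eigenvalues (j : Fin n) :
    sigmaMin A ^ 2 ≤ (isHermitian_conjTranspose_mul_self A).eigenvalues j := by
  have hσ : sigmaMin A ≤ singVals A j := ciInf_le (Finite.bddBelow_range _) j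
  calc sigmaMin A ^ 2 ≤ singVals A j ^ 2 :=
        pow_le_pow_left₀ (Real.iInf_nonneg fun _ => Real.sqrt_nonneg _) hσ 2
    _ = _ := Real.sq_sqrt (A.eigenvalues_conjTranspose_mul_self_nonneg j)

lemma sq_sigmaMin_mul_dotProduct_self_le (v : Fin n → ℝ) :
    sigmaMin A ^ 2 * (v ⬝ᵥ v) ≤ (A *ᵥ v) ⬝ᵥ (A *ᵥ v) := by
  have h := (isHermitian_conjTranspose_mul_self A).mul_dotProduct_self_le_dotProduct_mulVec
    (sq_sigmaMin_le_eigenvalues A) v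
  rwa [conjTranspose_eq_transpose_of_trivial, ← mulVec_mulVec, dotProduct_mulVec,
    vecMul_transpose] at h

lemma sigmaMin_pos (hn : 0 < n) (hA : A.rank = n) : 0 < sigmaMin A := by
  set hM := isHermitian_conjTranspose_mul_self A
  have hcard : Fintype.card {j // hM.eigenvalues j ≠ 0} = n := by
    rw [← hM.rank_eq_card_non_zero_eigs, conjTranspose_eq_transpose_of_trivial,
      rank_transpose_mul_self, hA]
  have hne : ∀ j, hM.eigenvalues j ≠ 0 := fun j hj =>
    (Fintype.card_subtype_lt (p := fun j => hM.eigenvalues j ≠ 0) (not_not.2 hj)).ne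
      (by rw [hcard, Fintype.card_fin])
  have : Nonempty (Fin n) := ⟨⟨0, hn⟩⟩
  obtain ⟨j, hj⟩ := Finite.exists_min (singVals A)
  exact (Real.sqrt_pos.2 ((A.eigenvalues_conjTranspose_mul_self_nonneg j).lt_of_ne'
    (hne j))).trans_le (le_ciInf hj)

lemma frobNorm_sq : frobNorm A ^ 2 = ∑ i, A i ⬝ᵥ A i := by
  simp only [frobNorm, dotProduct, ← sq]
  exact Real.sq_sqrt (by positivity)

lemma dotProduct_row_le_frobNorm_sq (i : ι) : A i ⬝ᵥ A i ≤ frobNorm A ^ 2 :=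
  frobNorm_sq A ▸
    Finset.single_le_sum (fun _ _ => dotProduct_self_star_nonneg _) (Finset.mem_univ i)

lemma dotProduct_self_mul_dotProduct_row_le_kappaF_sq_mul (hσ : 0 < sigmaMin A)
    (v : Fin n → ℝ) (i : ι) :
    (v ⬝ᵥ v) * (A i ⬝ᵥ A i) ≤ kappaF A ^ 2 * ((A *ᵥ v) ⬝ᵥ (A *ᵥ v)) := by
  have hv : v ⬝ᵥ v ≤ (A *ᵥ v) ⬝ᵥ (A *ᵥ v) / sigmaMin A ^ 2 := by
    rw [le_div_iff₀ (by positivity), mul_comm]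
    exact sq_sigmaMin_mul_dotProduct_self_le A v
  calc (v ⬝ᵥ v) * (A i ⬝ᵥ A i)
      ≤ (A *ᵥ v) ⬝ᵥ (A *ᵥ v) / sigmaMin A ^ 2 * frobNorm A ^ 2 :=
        mul_le_mul hv (dotProduct_row_le_frobNorm_sq A i) (dotProduct_self_star_nonneg _)
          (div_nonneg (dotProduct_self_star_nonneg _) (by positivity))
    _ = kappaF A ^ 2 * ((A *ᵥ v) ⬝ᵥ (A *ᵥ v)) := by
        rw [kappaF, div_pow]; ring

end SingularValues

section TangentialCone

variable {f d η : ℝ}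

lemma one_sub_mul_sq_le_mul_of_abs_sub_le (h : |f - d| ≤ η * |f|) : (1 - η) * f ^ 2 ≤ f * d := by
  have h' : |f * (f - d)| ≤ η * f ^ 2 := by
    rw [abs_mul, ← sq_abs f]
    nlinarith [abs_nonneg f]
  nlinarith [(abs_le.1 h').2]

lemma sq_le_one_add_sq_mul_sq_of_abs_sub_le (h : |f - d| ≤ η * |f|) :
    d ^ 2 ≤ (1 + η) ^ 2 * f ^ 2 := by
  have h' : |d| ≤ (1 + η) * |f| := by
    calc |d| = |f - (f - d)| := by rw [sub_sub_cancel]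
      _ ≤ |f| + |f - d| := abs_sub f (f - d)
      _ ≤ (1 + η) * |f| := by linarith
  simpa only [sq_abs, mul_pow] using pow_le_pow_left₀ (abs_nonneg d) h' 2

end TangentialCone

lemma dotProduct_self_le_of_abs_sub_le {ι : Type*} [Fintype ι] {f u : ι → ℝ} {η : ℝ}
    (h : ∀ i, |f i - u i| ≤ η * |f i|) : u ⬝ᵥ u ≤ (1 + η) ^ 2 * (f ⬝ᵥ f) := by
  simp only [dotProduct, Finset.mul_sum, ← sq]
  exact Finset.sum_le_sum fun i _ => sq_le_one_add_sq_mul_sq_of_abs_sub_le (h i)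

lemma dotProduct_self_le_card_mul_sq {ι : Type*} [Fintype ι] {f : ι → ℝ} {i₀ : ι}
    (h : ∀ i, f i ^ 2 ≤ f i₀ ^ 2) : f ⬝ᵥ f ≤ Fintype.card ι * f i₀ ^ 2 := by
  simpa [dotProduct, ← sq] using Finset.sum_le_card_nsmul Finset.univ _ _ fun i _ => h i

lemma norm_sub_div_norm_sq_smul_sq_le {E : Type*} [NormedAddCommGroup E] [InnerProductSpace ℝ E]
    {e g : E} {r η : ℝ} (h : (1 - η) * r ^ 2 ≤ r * inner ℝ e g) :
    ‖e - (r / ‖g‖ ^ 2) • g‖ ^ 2 ≤ ‖e‖ ^ 2 - (1 - 2 * η) * (r ^ 2 / ‖g‖ ^ 2) := by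
  have hsq : (r / ‖g‖ ^ 2) ^ 2 * ‖g‖ ^ 2 = r ^ 2 / ‖g‖ ^ 2 := by
    rcases eq_or_ne ‖g‖ 0 with hg | hg
    · simp [hg]
    · field_simp
  have hcross : (1 - η) * (r ^ 2 / ‖g‖ ^ 2) ≤ r / ‖g‖ ^ 2 * inner ℝ e g := by
    rw [mul_div_assoc', div_mul_eq_mul_div]
    exact div_le_div_of_nonneg_right h (by positivity)
  rw [norm_sub_sq_real, real_inner_smul_right, norm_smul, mul_pow, Real.norm_eq_abs, sq_abs, hsq]
  linarith

theorem mrnk_step_general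
    {n m : ℕ}
    (F : Fin m → EuclideanSpace ℝ (Fin n) → ℝ)
    (grad : Fin m → EuclideanSpace ℝ (Fin n) → EuclideanSpace ℝ (Fin n))
    (η : ℝ) (hη : η < 1 / 2)
    -- local tangential cone condition with constant η
    (hltcc : ∀ i (x₁ x₂ : EuclideanSpace ℝ (Fin n)),
      |F i x₁ - F i x₂ - ∑ j, grad i x₁ j * (x₁ j - x₂ j)| ≤ η * |F i x₁ - F i x₂|)
    (xstar : EuclideanSpace ℝ (Fin n)) (hstar : ∀ i, F i xstar = 0)
    (xk : EuclideanSpace ℝ (Fin n))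
    -- the full Jacobian F'(x_k)
    (J : Matrix (Fin m) (Fin n) ℝ)
    (hJdef : J = Matrix.of fun (i : Fin m) (j : Fin n) => grad i xk j)
    -- F'(x_k) has full column rank
    (hrank : J.rank = n)
    -- every row ∇F_i(x_k) is nonzero
    (hrows : ∀ i, grad i xk ≠ 0)
    -- i_k ∈ argmax_{1≤i≤m} |F_i(x_k)|²
    (ik : Fin m) (hik : ∀ i, (F i xk) ^ 2 ≤ (F ik xk) ^ 2)
    (xk1 : EuclideanSpace ℝ (Fin n))
    -- maximum residual nonlinear Kaczmarz update
    (hupd : xk1 = xk - (F ik xk / ‖grad ik xk‖ ^ 2) • grad ik xk) :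
    ‖xk1 - xstar‖ ^ 2
      ≤ (1 - (1 - 2 * η) / ((1 + η) ^ 2 * (m : ℝ) ^ 2 * kappaF J ^ 2))
          * ‖xk - xstar‖ ^ 2 := by
  set e := xk - xstar
  set g := grad ik xk
  set r := F ik xk
  have hJe : ∀ i, (J *ᵥ e.ofLp) i = inner ℝ e (grad i xk) := fun i => by
    simp [hJdef, mulVec, dotProduct, EuclideanSpace.inner_eq_star_dotProduct]
  have hcone : ∀ i, |F i xk - (J *ᵥ e.ofLp) i| ≤ η * |F i xk| := fun i => by
    rw [hJe]
    simpa [e, hstar, EuclideanSpace.inner_eq_star_dotProduct, dotProduct]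
      using hltcc i xk xstar
  have hn : 0 < n := Nat.pos_of_ne_zero fun h => hrows ik (by subst h; exact Subsingleton.elim _ _)
  have hg : 0 < ‖g‖ ^ 2 := by have := norm_pos_iff.2 (hrows ik); positivity
  have hres : ‖e‖ ^ 2 * ‖g‖ ^ 2 ≤ (1 + η) ^ 2 * m ^ 2 * kappaF J ^ 2 * r ^ 2 := calc
    ‖e‖ ^ 2 * ‖g‖ ^ 2 = (e.ofLp ⬝ᵥ e.ofLp) * (J ik ⬝ᵥ J ik) := by
      simp only [EuclideanSpace.real_norm_sq_eq, dotProduct, hJdef, of_apply, g, ← sq]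
    _ ≤ kappaF J ^ 2 * ((J *ᵥ e.ofLp) ⬝ᵥ (J *ᵥ e.ofLp)) :=
      dotProduct_self_mul_dotProduct_row_le_kappaF_sq_mul J (sigmaMin_pos J hn hrank) _ ik
    _ ≤ kappaF J ^ 2 * ((1 + η) ^ 2 * (m * r ^ 2)) := by
      grw [dotProduct_self_le_of_abs_sub_le hcone, dotProduct_self_le_card_mul_sq hik,
        Fintype.card_fin]
    _ ≤ kappaF J ^ 2 * ((1 + η) ^ 2 * (m ^ 2 * r ^ 2)) := by
      gcongr
      exact le_self_pow₀ (by exact_mod_cast ik.pos) two_ne_zero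
    _ = (1 + η) ^ 2 * m ^ 2 * kappaF J ^ 2 * r ^ 2 := by ring
  calc ‖xk1 - xstar‖ ^ 2 = ‖e - (r / ‖g‖ ^ 2) • g‖ ^ 2 := by rw [hupd, sub_right_comm]
    _ ≤ ‖e‖ ^ 2 - (1 - 2 * η) * (r ^ 2 / ‖g‖ ^ 2) :=
      norm_sub_div_norm_sq_smul_sq_le (hJe ik ▸ one_sub_mul_sq_le_mul_of_abs_sub_le (hcone ik))
    _ ≤ ‖e‖ ^ 2 - (1 - 2 * η) * (‖e‖ ^ 2 / ((1 + η) ^ 2 * m ^ 2 * kappaF J ^ 2)) := by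
      refine sub_le_sub_left (mul_le_mul_of_nonneg_left ?_ (by linarith)) _
      refine div_le_of_le_mul₀ (by positivity) (by positivity) ?_
      rw [div_mul_eq_mul_div, le_div_iff₀ hg]
      linarith
    _ = _ := by ring

/-- Theorem 2: one step of the maximum residual nonlinear Kaczmarz method,
`x_{k+1} = x_k − (F_{i_k}(x_k)/‖∇F_{i_k}(x_k)‖₂²) ∇F_{i_k}(x_k)` with
`i_k ∈ argmax_i |F_i(x_k)|²`, satisfies
`‖x_{k+1} − x⋆‖₂² ≤ (1 − (1−2η)/((1+η)² m² κ_F²(F'(x_k)))) ‖x_k − x⋆‖₂²`. -/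
theorem mrnk_step
    {n m : ℕ}
    (F : Fin m → EuclideanSpace ℝ (Fin n) → ℝ)
    (grad : Fin m → EuclideanSpace ℝ (Fin n) → EuclideanSpace ℝ (Fin n))
    (η : ℝ) (hη0 : 0 ≤ η) (hη : η < 1 / 2)
    -- F is differentiable with Jacobian whose i-th row is ∇F_i
    (hdiff : ∀ i x, HasGradientAt (F i) (grad i x) x)
    -- local tangential cone condition with constant η
    (hltcc : ∀ i (x₁ x₂ : EuclideanSpace ℝ (Fin n)),
      |F i x₁ - F i x₂ - ∑ j, grad i x₁ j * (x₁ j - x₂ j)| ≤ η * |F i x₁ - F i x₂|)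
    (xstar : EuclideanSpace ℝ (Fin n)) (hstar : ∀ i, F i xstar = 0)
    (xk : EuclideanSpace ℝ (Fin n))
    -- the full Jacobian F'(x_k)
    (J : Matrix (Fin m) (Fin n) ℝ)
    (hJdef : J = Matrix.of fun (i : Fin m) (j : Fin n) => grad i xk j)
    -- F'(x_k) has full column rank
    (hrank : J.rank = n)
    -- every row ∇F_i(x_k) is nonzero
    (hrows : ∀ i, grad i xk ≠ 0)
    -- i_k ∈ argmax_{1≤i≤m} |F_i(x_k)|²
    (ik : Fin m) (hik : ∀ i, (F i xk) ^ 2 ≤ (F ik xk) ^ 2)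
    (xk1 : EuclideanSpace ℝ (Fin n))
    -- maximum residual nonlinear Kaczmarz update
    (hupd : xk1 = xk - (F ik xk / ‖grad ik xk‖ ^ 2) • grad ik xk) :
    ‖xk1 - xstar‖ ^ 2
      ≤ (1 - (1 - 2 * η) / ((1 + η) ^ 2 * (m : ℝ) ^ 2 * kappaF J ^ 2))
          * ‖xk - xstar‖ ^ 2 :=
  mrnk_step_general F grad η hη hltcc xstar hstar xk J hJdef hrank hrows ik hik xk1 hupd
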